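/- arXiv:2304.05500 — 4 statements merged into one kernel-verified Lean document; each statement's English description precedes it below -/
import Mathlib

section
/- Let 𝒢 = (𝒱, ℰ) be a finite simple graph and let (Γ_v)_{v ∈ 𝒱} be a family of groups, each of which is torsion-free. Then the graph product group 𝒢{Γ_v} is torsion-free; that is, every element of 𝒢{Γ_v} of finite order is the identity. -/
open scoped commutatorElement

/-- A monoid is torsion-free if no element other than the identity has finite order
(the definition of `Monoid.IsTorsionFree` in the older Mathlib, since removed). -/
def Monoid.IsTorsionFree (G : Type*) [Monoid G] : Prop :=
  ∀ g : G, g ≠ 1 → ¬IsOfFinOrder g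

/-- The set of relators for a graph product: commutators of elements of vertex groups
joined by an edge of the graph. -/
def graphProductRels {V : Type*} (G : SimpleGraph V) (Γ : V → Type*) [∀ v, Group (Γ v)] :
    Subgroup (Monoid.CoprodI Γ) :=
  Subgroup.normalClosure
    {x | ∃ (u v : V) (_ : G.Adj u v) (g : Γ u) (h : Γ v),
      x = ⁅Monoid.CoprodI.of g, Monoid.CoprodI.of h⁆}

/-- The graph product group `𝒢{Γ_v}`: the quotient of the free product `∗_v Γ_v` by the
normal closure of the commutators `[g, h]` with `g ∈ Γ_u`, `h ∈ Γ_v`, `(u, v)` an edge. -/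
def GraphProduct {V : Type*} (G : SimpleGraph V) (Γ : V → Type*) [∀ v, Group (Γ v)] : Type _ :=
  Monoid.CoprodI Γ ⧸ graphProductRels G Γ

instance {V : Type*} (G : SimpleGraph V) (Γ : V → Type*) [∀ v, Group (Γ v)] :
    (graphProductRels G Γ).Normal :=
  Subgroup.normalClosure_normal

noncomputable instance {V : Type*} (G : SimpleGraph V) (Γ : V → Type*) [∀ v, Group (Γ v)] :
    Group (GraphProduct G Γ) :=
  QuotientGroup.Quotient.group _

/-!
Remove a vertex `v` from a finite set `B = insert v A` of vertices and let `L` be the set of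
neighbours of `v` in `A`. The graph product over `B` embeds in the amalgamated product of the
graph product over `A` with `Γ v × (graph product over L)` along the graph product over `L`,
and the graph product over `L` embeds in the one over `A` since the vertex groups outside `L` can
be killed. So by induction on `B` it suffices that an amalgamated product of torsion-free groups
along injective maps is torsion-free. There, every element is conjugate either into a factor or
to a cyclically reduced word of length at least two, whose powers are again reduced and hence
nontrivial by the normal form theorem.
-/

open Function

namespace Monoid.IsTorsionFree

variable {K L : Type*} [Group K] [Group L]

lemma of_injective {f : K →* L} (hf : Injective f) (hL : IsTorsionFree L) : IsTorsionFree K :=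
  fun g hg hfin => hL (f g) (fun h1 => hg (hf (by rw [h1, map_one]))) (f.isOfFinOrder hfin)

lemma prod (hK : IsTorsionFree K) (hL : IsTorsionFree L) : IsTorsionFree (K × L) := by
  intro g hg hfin
  refine hg (Prod.ext ?_ ?_)
  · exact not_not.mp fun h => hK g.1 h ((MonoidHom.fst K L).isOfFinOrder hfin)
  · exact not_not.mp fun h => hL g.2 h ((MonoidHom.snd K L).isOfFinOrder hfin)

end Monoid.IsTorsionFree

namespace Monoid.PushoutI

section NormalForm

open CoprodI

variable {ι H : Type*} {G : ι → Type*} [Group H] [∀ i, Group (G i)] {φ : ∀ i, H →* G i}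

variable (φ) in
def ofList (l : List (Σ i, G i)) : PushoutI φ :=
  (l.map fun p => of p.1 p.2).prod

@[simp] lemma ofList_nil : ofList φ [] = 1 := rfl

@[simp] lemma ofList_cons (p : Σ i, G i) (l : List (Σ i, G i)) :
    ofList φ (p :: l) = of p.1 p.2 * ofList φ l := by
  simp [ofList]

@[simp] lemma ofList_append (l₁ l₂ : List (Σ i, G i)) :
    ofList φ (l₁ ++ l₂) = ofList φ l₁ * ofList φ l₂ := by
  simp [ofList]

lemma ofList_flatten_replicate (l : List (Σ i, G i)) (n : ℕ) :
    ofList φ (List.replicate n l).flatten = ofList φ l ^ n := by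
  simp [ofList, List.map_flatten, List.prod_flatten, List.map_replicate, List.prod_replicate]

lemma ofCoprodI_word_prod (w : Word G) : ofCoprodI w.prod = ofList φ w.toList := by
  simp [Word.prod, ofList, map_list_prod, Function.comp_def]

variable (φ) in
def IsReducedList (l : List (Σ i, G i)) : Prop :=
  (∀ p ∈ l, p.2 ∉ (φ p.1).range) ∧ (l.map Sigma.fst).IsChain (· ≠ ·)

variable (φ) in
/-- Unlike the usual convention, a single letter is not cyclically reduced. -/
def IsCyclicallyReducedList (l : List (Σ i, G i)) : Prop :=
  IsReducedList φ l ∧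
    ∀ i ∈ (l.map Sigma.fst).getLast?, ∀ j ∈ (l.map Sigma.fst).head?, i ≠ j

lemma IsReducedList.ofList_mem_range_iff (hφ : ∀ i, Injective (φ i)) {l : List (Σ i, G i)}
    (hl : IsReducedList φ l) : ofList φ l ∈ (base φ).range ↔ l = [] := by
  refine ⟨fun hmem => ?_, fun h => h ▸ one_mem _⟩
  let w : Word G :=
    ⟨l, fun p hp h1 => hl.1 p hp (h1 ▸ one_mem _), (List.isChain_map _).1 hl.2⟩
  have hw : Reduced φ w := hl.1
  exact congrArg Word.toList
    (hw.eq_empty_of_mem_range hφ (by rwa [ofCoprodI_word_prod]))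

lemma exists_eq_base_mul_ofList (hφ : ∀ i, Injective (φ i)) (g : PushoutI φ) :
    ∃ h l, IsReducedList φ l ∧ g = base φ h * ofList φ l := by
  classical
  obtain ⟨d⟩ := NormalWord.transversal_nonempty φ hφ
  set w := NormalWord.equiv (d := d) g
  refine ⟨w.head, w.toList, ⟨fun p hp hmem => ?_, (List.isChain_map _).2 w.chain_ne⟩, ?_⟩
  · -- a letter in both the transversal and the base group is `1`
    obtain ⟨i, x⟩ := p
    have h1 := (d.compl i).1 (a₁ := (⟨x, hmem⟩, ⟨1, d.one_mem i⟩))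
      (a₂ := (⟨1, one_mem _⟩, ⟨x, w.normalized i x hp⟩)) (by simp)
    exact w.ne_one _ hp (congrArg Subtype.val (Prod.ext_iff.1 h1).1)
  · rw [← ofCoprodI_word_prod]
    exact ((NormalWord.equiv (d := d)).symm_apply_apply g).symm

lemma base_mul_ofList_cons (h : H) (i : ι) (a : G i) (l : List (Σ i, G i)) :
    base φ h * ofList φ (⟨i, a⟩ :: l) = ofList φ (⟨i, φ i h * a⟩ :: l) := by
  simp [← mul_assoc, ← of_apply_eq_base φ i]

lemma IsReducedList.base_mul_head {i : ι} {a : G i} {l : List (Σ i, G i)}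
    (hl : IsReducedList φ (⟨i, a⟩ :: l)) (h : H) :
    IsReducedList φ (⟨i, φ i h * a⟩ :: l) := by
  refine ⟨?_, by simpa using hl.2⟩
  rintro p (_ | ⟨_, hp⟩)
  · exact fun hmem => hl.1 _ List.mem_cons_self
      (by simpa using mul_mem (inv_mem (MonoidHom.mem_range.2 ⟨h, rfl⟩)) hmem)
  · exact hl.1 p (List.mem_cons_of_mem _ hp)

lemma IsCyclicallyReducedList.flatten_replicate {l : List (Σ i, G i)}
    (hl : IsCyclicallyReducedList φ l) (n : ℕ) :
    IsReducedList φ (List.replicate n l).flatten := by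
  rcases eq_or_ne l [] with rfl | hne
  · simp [IsReducedList]
  refine ⟨fun p hp => ?_, ?_⟩
  · obtain ⟨l', hl', hp⟩ := List.mem_flatten.1 hp
    exact hl.1.1 p (List.eq_of_mem_replicate hl' ▸ hp)
  rw [List.map_flatten, List.map_replicate, List.isChain_flatten (by simp [hne])]
  exact ⟨fun l' hl' => List.eq_of_mem_replicate hl' ▸ hl.1.2,
    List.isChain_replicate_of_rel _ hl.2⟩

lemma IsReducedList.exists_isConj_shorter {i : ι} {a c : G i} {m : List (Σ i, G i)}
    (hl : IsReducedList φ (⟨i, a⟩ :: (m ++ [⟨i, c⟩]))) :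
    ∃ h l, IsReducedList φ l ∧ l.length < m.length + 2 ∧
      IsConj (ofList φ (⟨i, a⟩ :: (m ++ [⟨i, c⟩]))) (base φ h * ofList φ l) := by
  have hconj :
      IsConj (ofList φ (⟨i, a⟩ :: (m ++ [⟨i, c⟩]))) (ofList φ m * of i (c * a)) :=
    isConj_iff.2 ⟨(of i a)⁻¹, by simp [mul_assoc]⟩
  by_cases hca : c * a ∈ (φ i).range
  · obtain ⟨h, hh⟩ := hca
    have hm : IsReducedList φ m :=
      ⟨fun p hp => hl.1 p (by simp [hp]), hl.2.infix ⟨[i], [i], by simp⟩⟩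
    refine ⟨h, m, hm, by omega, hconj.trans (isConj_iff.2 ⟨base φ h, ?_⟩)⟩
    rw [← hh, of_apply_eq_base]
    group
  · refine ⟨1, m ++ [⟨i, c * a⟩], ⟨?_, ?_⟩, by simp, by simpa using hconj⟩
    · intro p hp
      rcases List.mem_append.1 hp with hp | hp
      · exact hl.1 p (by simp [hp])
      · rw [List.mem_singleton.1 hp]
        exact hca
    · simpa using hl.2.tail

theorem exists_isConj_of_or_isCyclicallyReducedList [Nonempty ι] (hφ : ∀ i, Injective (φ i))
    (g : PushoutI φ) :
    (∃ (i : ι) (x : G i), IsConj g (of i x)) ∨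
      ∃ l, l ≠ [] ∧ IsCyclicallyReducedList φ l ∧ IsConj g (ofList φ l) := by
  obtain ⟨h, l, hl, rfl⟩ := exists_eq_base_mul_ofList hφ g
  induction hn : l.length using Nat.strong_induction_on generalizing h l with | _ n ih =>
  rcases l with _ | ⟨⟨i, a⟩, r⟩
  · refine .inl ⟨Classical.arbitrary ι, φ _ h, ?_⟩
    rw [of_apply_eq_base, ofList_nil, mul_one]
  rw [base_mul_ofList_cons]
  replace hl := hl.base_mul_head h
  by_cases hcyc : IsCyclicallyReducedList φ (⟨i, φ i h * a⟩ :: r)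
  · exact .inr ⟨_, List.cons_ne_nil _ _, hcyc, .refl _⟩
  rcases r.eq_nil_or_concat with rfl | ⟨m, ⟨j, c⟩, rfl⟩
  · exact .inl ⟨i, φ i h * a, by simpa using IsConj.refl (of (φ := φ) i (φ i h * a))⟩
  rw [List.concat_eq_append] at *
  obtain rfl : j = i := by
    have hidx : (⟨i, φ i h * a⟩ :: (m ++ [⟨j, c⟩]) : List (Σ i, G i)).map Sigma.fst =
        i :: m.map Sigma.fst ++ [j] := by simp
    rw [IsCyclicallyReducedList, hidx, List.getLast?_concat] at hcyc
    simpa [hl] using hcyc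
  obtain ⟨h', l', hl', hlen, hconj⟩ := hl.exists_isConj_shorter
  have hlt : l'.length < n := by
    simp only [List.length_cons, List.length_append] at hn
    omega
  refine (ih _ hlt h' l' hl' rfl).imp ?_ ?_
  · exact fun ⟨i, x, hx⟩ => ⟨i, x, hconj.trans hx⟩
  · exact fun ⟨l, hne, hl, hx⟩ => ⟨l, hne, hl, hconj.trans hx⟩

theorem isTorsionFree [Nonempty ι] (hφ : ∀ i, Injective (φ i))
    (hG : ∀ i, IsTorsionFree (G i)) : IsTorsionFree (PushoutI φ) := by
  intro g hg hfin
  rcases exists_isConj_of_or_isCyclicallyReducedList hφ g with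
    ⟨i, x, hx⟩ | ⟨l, hne, hl, hx⟩
  · have hx1 : x = 1 := not_not.1 fun h1 =>
      hG i x h1 ((of_injective hφ i).isOfFinOrder_iff.1 (hx.isOfFinOrder hfin))
    exact hg (isConj_one_right.1 (by simpa [hx1] using hx.symm))
  · obtain ⟨n, hn, hgn⟩ := isOfFinOrder_iff_pow_eq_one.1 (hx.isOfFinOrder hfin)
    have := (hl.flatten_replicate n).ofList_mem_range_iff hφ
    rw [ofList_flatten_replicate, hgn] at this
    simp [hne, hn.ne'] at this

end NormalForm

section Pair

universe u

variable {H : Type*} [Group H] {K₀ K₁ : Type u} [Group K₀] [Group K₁]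

/-- The two factors of a binary amalgamated product, written with `Bool.rec` so that
`pairFactor K₀ K₁ false` unfolds to `K₀` at reducible transparency. -/
abbrev pairFactor (K₀ K₁ : Type u) (b : Bool) : Type u :=
  Bool.rec K₀ K₁ b

instance (b : Bool) : Group (pairFactor K₀ K₁ b) :=
  Bool.rec (motive := fun b => Group (pairFactor K₀ K₁ b)) ‹_› ‹_› b

def pairHom (f₀ : H →* K₀) (f₁ : H →* K₁) (b : Bool) : H →* pairFactor K₀ K₁ b :=
  Bool.rec (motive := fun b => H →* pairFactor K₀ K₁ b) f₀ f₁ b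

def pairLift {K : Type*} [Group K] (f₀ : K₀ →* K) (f₁ : K₁ →* K) (b : Bool) :
    pairFactor K₀ K₁ b →* K :=
  Bool.rec (motive := fun b => pairFactor K₀ K₁ b →* K) f₀ f₁ b

end Pair

end Monoid.PushoutI

noncomputable section

namespace GraphProduct

open Monoid Monoid.PushoutI

variable {V : Type*} {G : SimpleGraph V} {Γ : V → Type*} [∀ v, Group (Γ v)]

variable (G Γ) in
def of (v : V) : Γ v →* GraphProduct G Γ :=
  (QuotientGroup.mk' (graphProductRels G Γ)).comp CoprodI.of

lemma commute_of {u v : V} (huv : G.Adj u v) (x : Γ u) (y : Γ v) :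
    Commute (of G Γ u x) (of G Γ v y) := by
  have : QuotientGroup.mk' (graphProductRels G Γ) ⁅CoprodI.of x, CoprodI.of y⁆ = 1 :=
    (QuotientGroup.eq_one_iff _).2 (Subgroup.subset_normalClosure ⟨u, v, huv, x, y, rfl⟩)
  rwa [map_commutatorElement, commutatorElement_eq_one_iff_commute] at this

section Lift

variable {K : Type*} [Group K]

def lift (f : ∀ v, Γ v →* K) (hf : ∀ u v, G.Adj u v → ∀ x y, Commute (f u x) (f v y)) :
    GraphProduct G Γ →* K :=
  QuotientGroup.lift _ (CoprodI.lift f) <| Subgroup.normalClosure_le_normal <| by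
    rintro _ ⟨u, v, huv, x, y, rfl⟩
    simpa [map_commutatorElement, commutatorElement_eq_one_iff_commute] using hf u v huv x y

@[simp] lemma lift_of (f : ∀ v, Γ v →* K)
    (hf : ∀ u v, G.Adj u v → ∀ x y, Commute (f u x) (f v y)) (v : V) (x : Γ v) :
    lift f hf (of G Γ v x) = f v x :=
  rfl

lemma hom_ext {f g : GraphProduct G Γ →* K}
    (h : ∀ v, f.comp (of G Γ v) = g.comp (of G Γ v)) : f = g :=
  QuotientGroup.monoidHom_ext _ (CoprodI.ext_hom _ _ h)

end Lift

@[elab_as_elim]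
lemma induction_on {motive : GraphProduct G Γ → Prop} (x : GraphProduct G Γ) (one : motive 1)
    (of : ∀ v (y : Γ v), motive (of G Γ v y))
    (mul : ∀ x y, motive x → motive y → motive (x * y)) : motive x := by
  obtain ⟨x, rfl⟩ := QuotientGroup.mk'_surjective _ x
  induction x using CoprodI.induction_on with
  | one => exact one
  | of v y => exact of v y
  | mul x y hx hy => exact mul _ _ hx hy

lemma isTorsionFree_of_isEmpty [IsEmpty V] : IsTorsionFree (GraphProduct G Γ) := by
  have : MonoidHom.id (GraphProduct G Γ) = 1 := hom_ext fun v => isEmptyElim v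
  exact fun g hg _ => hg (DFunLike.congr_fun this g)

variable (G Γ) in
abbrev induce (A : Set V) : Type _ :=
  GraphProduct (G.induce A) fun v : A => Γ v

variable {A B : Set V}

variable (G Γ) in
def ofMem {v : V} (hv : v ∈ A) : Γ v →* induce G Γ A :=
  of (G.induce A) (fun v : A => Γ v) ⟨v, hv⟩

lemma commute_ofMem {u v : V} (huv : G.Adj u v) (hu : u ∈ A) (hv : v ∈ A)
    (x : Γ u) (y : Γ v) :
    Commute (ofMem G Γ hu x) (ofMem G Γ hv y) :=
  commute_of (G := G.induce A) (Γ := fun v : A => Γ v) (u := ⟨u, hu⟩) (v := ⟨v, hv⟩)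
    huv x y

def inclusion (hAB : A ⊆ B) : induce G Γ A →* induce G Γ B :=
  lift (fun v => ofMem G Γ (hAB v.2)) fun _ _ huv _ _ => commute_ofMem (G := G) huv _ _ _ _

lemma inclusion_comp_inclusion {C : Set V} (hAB : A ⊆ B) (hBC : B ⊆ C) :
    (inclusion (G := G) (Γ := Γ) hBC).comp (inclusion hAB) = inclusion (hAB.trans hBC) :=
  hom_ext fun _ => rfl

lemma commute_ofMem_inclusion {C : Set V} {v : V} (hv : v ∈ B) (hCB : C ⊆ B)
    (hadj : ∀ w ∈ C, G.Adj v w) (x : Γ v) (y : induce G Γ C) :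
    Commute (ofMem G Γ hv x) (inclusion hCB y) := by
  induction y using induction_on with
  | one => rw [map_one]; exact Commute.one_right _
  | of w y => exact commute_ofMem (G := G) (hadj w w.2) hv (hCB w.2) x y
  | mul y z hy hz => rw [map_mul]; exact hy.mul_right hz

lemma inclusion_injective (hAB : A ⊆ B) : Injective (inclusion (G := G) (Γ := Γ) hAB) := by
  classical
  let retraction : induce G Γ B →* induce G Γ A :=
    lift (fun v => if h : v.1 ∈ A then ofMem G Γ h else 1) fun u v huv x y => by
      by_cases hu : u.1 ∈ A
      · by_cases hv : v.1 ∈ A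
        · simpa [hu, hv] using commute_ofMem (G := G) (u := u.1) (v := v.1) huv hu hv x y
        · simp [hv]
      · simp [hu]
  have : retraction.comp (inclusion hAB) = .id _ :=
    hom_ext fun v => by ext x; simp [retraction, inclusion, ofMem, v.2]
  exact LeftInverse.injective (g := retraction) (DFunLike.congr_fun this)

section Amalgam

variable {v : V}

variable (G Γ A v) in
/-- `Γ(A) *_{Γ(L)} (Γ v × Γ(L))`, where `L = A ∩ N(v)` and `Γ(·)` is `induce G Γ`. -/
abbrev Amalgam : Type _ :=
  PushoutI (pairHom (inclusion (G := G) (Γ := Γ) (Set.inter_subset_left (t := G.neighborSet v)))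
    (MonoidHom.inr (Γ v) (induce G Γ (A ∩ G.neighborSet v))))

lemma of_false_ofMem_eq {w : V} (hw : w ∈ A ∩ G.neighborSet v) (y : Γ w) :
    (PushoutI.of false : _ →* Amalgam G Γ A v) (ofMem G Γ hw.1 y) =
      (PushoutI.of true : _ →* Amalgam G Γ A v) (1, ofMem G Γ hw y) :=
  (of_apply_eq_base _ false (ofMem G Γ hw y)).trans
    (of_apply_eq_base _ true (ofMem G Γ hw y)).symm

lemma commute_of_true_of_false {w : V} (hw : w ∈ A ∩ G.neighborSet v) (x : Γ v) (y : Γ w) :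
    Commute ((PushoutI.of true : _ →* Amalgam G Γ A v) (x, 1))
      ((PushoutI.of false : _ →* Amalgam G Γ A v) (ofMem G Γ hw.1 y)) := by
  rw [of_false_ofMem_eq hw]
  exact (MonoidHom.commute_inl_inr _ _).map _

open scoped Classical in
variable (A v) in
def toAmalgam : induce G Γ (insert v A) →* Amalgam G Γ A v :=
  lift (fun u => if h : u.1 = v then
      (PushoutI.of true).comp ((MonoidHom.inl _ _).comp (MulEquiv.cast h).toMonoidHom)
    else (PushoutI.of false).comp (ofMem G Γ ((Set.mem_insert_iff.1 u.2).resolve_left h))) <| by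
    rintro ⟨u, hu⟩ ⟨w, hw⟩ huw x y
    dsimp only
    split_ifs with hu' hw' hw'
    · subst hu' hw'
      exact absurd huw (G.loopless.irrefl _)
    · subst hu'
      exact commute_of_true_of_false ⟨(Set.mem_insert_iff.1 hw).resolve_left hw', huw⟩ x y
    · subst hw'
      exact (commute_of_true_of_false
        ⟨(Set.mem_insert_iff.1 hu).resolve_left hu', huw.symm⟩ y x).symm
    · exact (commute_ofMem (G := G) huw _ _ x y).map (PushoutI.of false : _ →* Amalgam G Γ A v)

variable (A v) in
def ofAmalgam : Amalgam G Γ A v →* induce G Γ (insert v A) :=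
  have hL : A ∩ G.neighborSet v ⊆ insert v A :=
    Set.inter_subset_left.trans (Set.subset_insert v A)
  have comm := commute_ofMem_inclusion (G := G) (Γ := Γ) (Set.mem_insert v A) hL fun _ hw => hw.2
  PushoutI.lift
    (pairLift (inclusion (Set.subset_insert v A))
      ((ofMem G Γ (Set.mem_insert v A)).noncommCoprod _ comm))
    (inclusion hL)
    (Bool.forall_bool.2 ⟨inclusion_comp_inclusion Set.inter_subset_left (Set.subset_insert v A),
      MonoidHom.noncommCoprod_comp_inr _ _ comm⟩)

lemma ofAmalgam_comp_toAmalgam :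
    (ofAmalgam A v).comp (toAmalgam A v) = MonoidHom.id (induce G Γ (insert v A)) := by
  refine hom_ext fun ⟨u, hu⟩ => ?_
  ext x
  by_cases h : u = v
  · subst h
    simp only [ofAmalgam, toAmalgam, MonoidHom.comp_apply, lift_of, dite_true,
      MulEquiv.toMonoidHom_eq_coe, MonoidHom.coe_coe, MulEquiv.cast_apply, cast_eq,
      MonoidHom.inl_apply, PushoutI.lift_of, MonoidHom.id_apply]
    rfl
  · simp only [ofAmalgam, toAmalgam, MonoidHom.comp_apply, lift_of, h, dite_false,
      PushoutI.lift_of, MonoidHom.id_apply]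
    rfl

lemma isTorsionFree_induce_insert (hv : IsTorsionFree (Γ v)) (hA : IsTorsionFree (induce G Γ A)) :
    IsTorsionFree (induce G Γ (insert v A)) := by
  have hLA : A ∩ G.neighborSet v ⊆ A := Set.inter_subset_left
  have hL := hA.of_injective (inclusion_injective (G := G) (Γ := Γ) hLA)
  have hAmalgam : IsTorsionFree (Amalgam G Γ A v) :=
    PushoutI.isTorsionFree
      (Bool.forall_bool.2 ⟨inclusion_injective hLA, Prod.mk_right_injective 1⟩)
      (Bool.forall_bool.2 ⟨hA, hv.prod hL⟩)
  exact hAmalgam.of_injective (LeftInverse.injective (DFunLike.congr_fun ofAmalgam_comp_toAmalgam))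

end Amalgam

lemma isTorsionFree_induce (hΓ : ∀ v, IsTorsionFree (Γ v)) (hA : A.Finite) :
    IsTorsionFree (induce G Γ A) := by
  induction A, hA using Set.Finite.induction_on with
  | empty => exact isTorsionFree_of_isEmpty
  | insert _ _ ih => exact isTorsionFree_induce_insert (hΓ _) ih

lemma isTorsionFree_of_induce_univ (h : IsTorsionFree (induce G Γ Set.univ)) :
    IsTorsionFree (GraphProduct G Γ) := by
  let f : GraphProduct G Γ →* induce G Γ Set.univ :=
    lift (fun v => ofMem G Γ (Set.mem_univ v)) fun _ _ huv _ _ => commute_ofMem huv _ _ _ _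
  let g : induce G Γ Set.univ →* GraphProduct G Γ :=
    lift (fun v => of G Γ v) fun _ _ huv _ _ => commute_of (G := G) huv _ _
  have : g.comp f = .id _ := hom_ext fun _ => rfl
  exact h.of_injective (LeftInverse.injective (g := g) (DFunLike.congr_fun this))

end GraphProduct

end

/-- If `𝒢` is a finite simple graph and each vertex group `Γ_v` is torsion-free, then the
graph product group `𝒢{Γ_v}` is torsion-free. -/
theorem graphProduct_isTorsionFree {V : Type*} [Fintype V] (G : SimpleGraph V)
    (Γ : V → Type*) [∀ v, Group (Γ v)] (h : ∀ v, Monoid.IsTorsionFree (Γ v)) :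
    Monoid.IsTorsionFree (GraphProduct G Γ) :=
  GraphProduct.isTorsionFree_of_induce_univ (GraphProduct.isTorsionFree_induce h Set.finite_univ)
end

section
/- Let n ≥ 1 and let Γ = Γ₁ × ⋯ × Γₙ be a direct product of groups each of which is virtually prime. Suppose Σ₁ and Σ₂ are commuting subgroups of Γ such that the subgroup Σ₁Σ₂ they generate is isomorphic to Σ₁ × Σ₂ via multiplication and has finite index in Γ. Then there exist finite index subgroups Σᵢ⁰ ≤ Σᵢ for i = 1, 2, finite index subgroups Γⱼ⁰ ≤ Γⱼ for 1 ≤ j ≤ n, and a partition T₁ ⊔ T₂ = {1, …, n} such that, under the identification of subgroups of Γ with subgroups of the product, Σᵢ⁰ = ×_{j ∈ Tᵢ} Γⱼ⁰ for each i = 1, 2. -/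
/-!
In each coordinate the projections of `S₁` and `S₂` commute and generate a finite index subgroup
of the virtually prime group `Γ j`, so one of them is finite. Let `T₁` be the set of coordinates
where the projection of `S₂` is finite. As the projections of `S₁` off `T₁` are finite, the part
of `S₁` supported on `T₁` has finite index in `S₁`; likewise the part of `S₂` supported on `T₁ᶜ`
has finite index in `S₂`, and since `S₁` and `S₂` commute the two parts still generate a finite
index subgroup `W`. Projecting `W` onto the `T₁`-coordinates kills the second part, so for
`j ∈ T₁` every `g` with `Pi.mulSingle j g ∈ W` satisfies `Pi.mulSingle j g ∈ S₁`. Hence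
`Γ₀ j := {g | Pi.mulSingle j g ∈ S₁}` has finite index, and symmetrically on `T₁ᶜ`; the products
of the `Γ₀ j` over `T₁` and over `T₁ᶜ` are the required subgroups.
-/

/-- A group `G` is *virtually prime* if it admits no finite index subgroup `G₀` generated
by two infinite commuting subgroups. -/
def VirtuallyPrime (G : Type*) [Group G] : Prop :=
  ¬ ∃ (G₀ A B : Subgroup G), G₀.FiniteIndex ∧ A ≤ G₀ ∧ B ≤ G₀ ∧
      (A : Set G).Infinite ∧ (B : Set G).Infinite ∧
      (∀ a ∈ A, ∀ b ∈ B, a * b = b * a) ∧ A ⊔ B = G₀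

open Set Subgroup

namespace VirtuallyPrime

variable {G : Type*} [Group G]

theorem finite_or_finite_of_commute (hG : VirtuallyPrime G) {A B : Subgroup G}
    (hAB : ∀ a ∈ A, ∀ b ∈ B, a * b = b * a) (hfi : (A ⊔ B).FiniteIndex) :
    (A : Set G).Finite ∨ (B : Set G).Finite := by
  by_contra! h
  exact hG ⟨A ⊔ B, A, B, hfi, le_sup_left, le_sup_right, h.1, h.2, hAB, rfl⟩

theorem finite_or_finite_map_of_commute {H : Type*} [Group H] (hG : VirtuallyPrime G)
    {f : H →* G} (hf : Function.Surjective f) {A B : Subgroup H}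
    (hAB : ∀ a ∈ A, ∀ b ∈ B, a * b = b * a) (hfi : (A ⊔ B).FiniteIndex) :
    (A.map f : Set G).Finite ∨ (B.map f : Set G).Finite := by
  refine hG.finite_or_finite_of_commute ?_ ?_
  · rintro _ ⟨a, ha, rfl⟩ _ ⟨b, hb, rfl⟩
    rw [← map_mul, ← map_mul, hAB a ha b hb]
  · rw [← Subgroup.map_sup, Subgroup.finiteIndex_iff]
    exact fun h ↦ hfi.index_ne_zero (zero_dvd_iff.mp (h ▸ Subgroup.index_map_dvd _ hf))

end VirtuallyPrime

namespace Subgroup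

section Group

variable {G G' : Type*} [Group G] [Group G']

instance finiteIndex_comap (H : Subgroup G') [H.FiniteIndex] (f : G →* G') :
    (H.comap f).FiniteIndex :=
  ⟨by rw [index_comap]; exact (H.instFiniteIndex_subgroupOf f.range).index_ne_zero⟩

theorem relIndex_sup_ne_zero_of_commute {A B A' B' : Subgroup G}
    (hAB : ∀ a ∈ A, ∀ b ∈ B, a * b = b * a) (hA' : A'.relIndex A ≠ 0) (hB' : B'.relIndex B ≠ 0) :
    (A ⊓ A' ⊔ B ⊓ B').relIndex (A ⊔ B) ≠ 0 := by
  have hcomm (a : A) (b : B) : Commute (A.subtype a) (B.subtype b) := hAB a a.2 b b.2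
  let μ := A.subtype.noncommCoprod B.subtype hcomm
  let K := (A'.subgroupOf A).prod (B'.subgroupOf B)
  have hμ : μ.range = A ⊔ B := by
    simp only [μ]
    rw [MonoidHom.noncommCoprod_range, range_subtype, range_subtype]
  have hK : K.map μ ≤ A ⊓ A' ⊔ B ⊓ B' := by
    rintro _ ⟨⟨a, b⟩, ⟨ha, hb⟩, rfl⟩
    exact mul_mem (mem_sup_left ⟨a.2, ha⟩) (mem_sup_right ⟨b.2, hb⟩)
  refine fun h ↦ ?_
  have hKμ : (K.map μ).relIndex μ.range = 0 := hμ ▸ relIndex_eq_zero_of_le_left hK h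
  rw [MonoidHom.range_eq_map, relIndex_map_map, top_sup_eq, relIndex_top_right] at hKμ
  have hK' : K.index ≠ 0 := by
    rw [index_prod]
    exact mul_ne_zero hA' hB'
  exact hK' (zero_dvd_iff.mp (hKμ ▸ index_dvd_of_le le_sup_left))

end Group

section Pi

variable {ι : Type*} {Γ : ι → Type*} [∀ i, Group (Γ i)]

theorem finiteIndex_pi [Finite ι] {H : ∀ i, Subgroup (Γ i)} (hH : ∀ i, (H i).FiniteIndex) :
    (pi univ H).FiniteIndex := by
  have : pi univ H = ⨅ i, (H i).comap (Pi.evalMonoidHom Γ i) := by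
    ext x
    simp [mem_pi]
  rw [this]
  exact finiteIndex_iInf fun i ↦ (H i).finiteIndex_comap _

theorem relIndex_pi_bot_ne_zero [Finite ι] {S : Subgroup (∀ i, Γ i)} {U : Set ι}
    (hS : ∀ j ∈ U, (S.map (Pi.evalMonoidHom Γ j) : Set (Γ j)).Finite) :
    (pi U fun _ ↦ ⊥).relIndex S ≠ 0 := by
  have : (pi U fun _ ↦ ⊥ : Subgroup (∀ i, Γ i)) = ⨅ j : U, (Pi.evalMonoidHom Γ j).ker := by
    ext x
    simp [mem_pi]
  rw [this]
  refine relIndex_iInf_ne_zero fun j ↦ ?_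
  rw [relIndex_ker]
  have := (hS j j.2).to_subtype
  exact Nat.card_ne_zero.mpr ⟨inferInstance, this⟩

theorem comap_mulSingle_sup_le [DecidableEq ι] {S S' : Subgroup (∀ i, Γ i)} {T : Set ι}
    (hS : S ≤ pi Tᶜ fun _ ↦ ⊥) (hS' : S' ≤ pi T fun _ ↦ ⊥) {j : ι} (hj : j ∈ T) :
    (S ⊔ S').comap (MonoidHom.mulSingle Γ j) ≤ S.comap (MonoidHom.mulSingle Γ j) := by
  classical
  let ρ : (∀ i, Γ i) →* ∀ i, Γ i :=
    MonoidHom.pi fun i ↦ if i ∈ T then Pi.evalMonoidHom Γ i else 1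
  have hρ (x : ∀ i, Γ i) (i : ι) : ρ x i = if i ∈ T then x i else 1 := by
    simp only [ρ, MonoidHom.pi_apply]
    split_ifs <;> rfl
  have hρS : (S ⊔ S').map ρ ≤ S := by
    rw [map_sup, sup_le_iff, map_le_iff_le_comap, map_le_iff_le_comap]
    refine ⟨fun x hx ↦ ?_, fun x hx ↦ ?_⟩
    · have hρx : ρ x = x := funext fun i ↦ by
        rw [hρ, ite_eq_left_iff]
        exact fun hi ↦ (mem_bot.mp (hS hx i hi)).symm
      rwa [mem_comap, hρx]
    · have hρx : ρ x = 1 := funext fun i ↦ by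
        rw [hρ, Pi.one_apply, ite_eq_right_iff]
        exact fun hi ↦ mem_bot.mp (hS' hx i hi)
      rw [mem_comap, hρx]
      exact one_mem S
  intro g hg
  have hρg : ρ (Pi.mulSingle j g) = Pi.mulSingle j g := funext fun i ↦ by
    rw [hρ, ite_eq_left_iff]
    intro hi
    rw [Pi.mulSingle_eq_of_ne (ne_of_mem_of_not_mem hj hi).symm]
  rw [mem_comap, MonoidHom.mulSingle_apply, ← hρg]
  exact hρS (mem_map_of_mem ρ hg)

theorem finiteIndex_comap_mulSingle_of_commute [Finite ι] [DecidableEq ι]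
    {S S' : Subgroup (∀ i, Γ i)} {T : Set ι}
    (hcomm : ∀ a ∈ S, ∀ b ∈ S', a * b = b * a) (hfi : (S ⊔ S').FiniteIndex)
    (hS : ∀ j ∉ T, (S.map (Pi.evalMonoidHom Γ j) : Set (Γ j)).Finite)
    (hS' : ∀ j ∈ T, (S'.map (Pi.evalMonoidHom Γ j) : Set (Γ j)).Finite) {j : ι} (hj : j ∈ T) :
    (S.comap (MonoidHom.mulSingle Γ j)).FiniteIndex := by
  have hsup : (S ⊓ pi Tᶜ (fun _ ↦ ⊥) ⊔ S' ⊓ pi T fun _ ↦ ⊥).FiniteIndex := by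
    rw [finiteIndex_iff, ← relIndex_top_right]
    refine relIndex_ne_zero_trans (relIndex_sup_ne_zero_of_commute hcomm
      (relIndex_pi_bot_ne_zero hS) (relIndex_pi_bot_ne_zero hS')) ?_
    rw [relIndex_top_right]
    exact hfi.index_ne_zero
  exact finiteIndex_of_le <|
    (comap_mulSingle_sup_le inf_le_right (inf_le_right (a := S')) hj).trans
      (comap_mono inf_le_left)

theorem pi_ite_bot_le [DecidableEq ι] [Finite ι] {S : Subgroup (∀ i, Γ i)} {T : Finset ι}
    {H : ∀ i, Subgroup (Γ i)} (hH : ∀ j ∈ T, H j ≤ S.comap (MonoidHom.mulSingle Γ j)) :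
    pi univ (fun j ↦ if j ∈ T then H j else ⊥) ≤ S := by
  refine pi_le_iff.mpr fun j ↦ ?_
  split_ifs with hj
  · exact map_le_iff_le_comap.mpr (hH j hj)
  · rw [map_bot]
    exact bot_le

theorem relIndex_pi_ite_bot_ne_zero [DecidableEq ι] [Finite ι] {S : Subgroup (∀ i, Γ i)}
    {T : Finset ι} {H : ∀ i, Subgroup (Γ i)} (hH : ∀ j, (H j).FiniteIndex)
    (hS : (pi (↑T)ᶜ fun _ ↦ ⊥ : Subgroup (∀ i, Γ i)).relIndex S ≠ 0) :
    (pi univ fun j ↦ if j ∈ T then H j else ⊥).relIndex S ≠ 0 := by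
  have hpi : pi univ (fun j ↦ if j ∈ T then H j else ⊥) = pi univ H ⊓ pi (↑T)ᶜ fun _ ↦ ⊥ := by
    ext x
    simp only [mem_inf, mem_pi, mem_univ, true_implies, mem_compl_iff, Finset.mem_coe]
    refine ⟨fun h ↦ ⟨fun j ↦ ?_, fun j hj ↦ ?_⟩, fun ⟨hH, hT⟩ j ↦ ?_⟩
    · have := h j
      split_ifs at this with hj
      · exact this
      · exact (mem_bot.mp this) ▸ one_mem _
    · simpa [hj] using h j
    · split_ifs with hj
      exacts [hH j, hT j hj]
  have := finiteIndex_pi hH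
  rw [hpi]
  exact relIndex_inf_ne_zero (instFiniteIndex_subgroupOf _ S).index_ne_zero hS

end Pi

end Subgroup

theorem virtuallyPrime_product_factorization_general {n : ℕ}
    (Γ : Fin n → Type*) [∀ j, Group (Γ j)] (hprime : ∀ j, VirtuallyPrime (Γ j))
    (S₁ S₂ : Subgroup (∀ j, Γ j))
    (hcomm : ∀ a ∈ S₁, ∀ b ∈ S₂, a * b = b * a)
    (hfi : (S₁ ⊔ S₂).FiniteIndex) :
    ∃ (S₁₀ S₂₀ : Subgroup (∀ j, Γ j)) (Γ₀ : ∀ j, Subgroup (Γ j)) (T₁ T₂ : Finset (Fin n)),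
      S₁₀ ≤ S₁ ∧ S₂₀ ≤ S₂ ∧ S₁₀.relIndex S₁ ≠ 0 ∧ S₂₀.relIndex S₂ ≠ 0 ∧
      (∀ j, (Γ₀ j).FiniteIndex) ∧ Disjoint T₁ T₂ ∧ T₁ ∪ T₂ = Finset.univ ∧
      S₁₀ = Subgroup.pi Set.univ (fun j => if j ∈ T₁ then Γ₀ j else ⊥) ∧
      S₂₀ = Subgroup.pi Set.univ (fun j => if j ∈ T₂ then Γ₀ j else ⊥) := by
  classical
  have hdich (j : Fin n) := (hprime j).finite_or_finite_map_of_commute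
    (f := Pi.evalMonoidHom Γ j) (fun g ↦ ⟨Pi.mulSingle j g, by simp⟩) hcomm hfi
  let T₁ : Finset (Fin n) := {j | (S₂.map (Pi.evalMonoidHom Γ j) : Set (Γ j)).Finite}
  have hS₁ (j) (hj : j ∉ T₁) : (S₁.map (Pi.evalMonoidHom Γ j) : Set (Γ j)).Finite :=
    (hdich j).resolve_right (by simpa [T₁] using hj)
  have hS₂ (j) (hj : j ∈ T₁) : (S₂.map (Pi.evalMonoidHom Γ j) : Set (Γ j)).Finite := by
    simpa [T₁] using hj
  let Γ₀ (j : Fin n) : Subgroup (Γ j) :=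
    if j ∈ T₁ then S₁.comap (MonoidHom.mulSingle Γ j) else S₂.comap (MonoidHom.mulSingle Γ j)
  have hΓ₀ (j) : (Γ₀ j).FiniteIndex := by
    dsimp only [Γ₀]
    split_ifs with hj
    · exact finiteIndex_comap_mulSingle_of_commute hcomm hfi hS₁ hS₂ hj
    · exact finiteIndex_comap_mulSingle_of_commute (T := (↑T₁)ᶜ)
        (fun a ha b hb ↦ (hcomm b hb a ha).symm) (sup_comm S₁ S₂ ▸ hfi)
        (by simpa using hS₂) hS₁ hj
  refine ⟨_, _, Γ₀, T₁, T₁ᶜ, pi_ite_bot_le fun j hj ↦ ?_, pi_ite_bot_le fun j hj ↦ ?_,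
    relIndex_pi_ite_bot_ne_zero hΓ₀ (relIndex_pi_bot_ne_zero hS₁),
    relIndex_pi_ite_bot_ne_zero hΓ₀ ?_, hΓ₀, disjoint_compl_right, Finset.union_compl T₁, rfl, rfl⟩
  · simp only [Γ₀, if_pos hj, le_rfl]
  · simp only [Γ₀, if_neg (Finset.mem_compl.mp hj), le_rfl]
  · rw [Finset.coe_compl, compl_compl]
    exact relIndex_pi_bot_ne_zero hS₂

/-- Unique prime factorization for products of virtually prime groups: if
`Σ₁, Σ₂ ≤ Γ₁ × ⋯ × Γₙ` are commuting subgroups with `Σ₁ ∩ Σ₂ = 1` (so that `Σ₁Σ₂ ≅ Σ₁ × Σ₂`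
via multiplication) generating a finite index subgroup, then there are finite index
subgroups `Σᵢ⁰ ≤ Σᵢ`, finite index subgroups `Γⱼ⁰ ≤ Γⱼ` and a partition
`T₁ ⊔ T₂ = {1, …, n}` with `Σᵢ⁰ = ×_{j ∈ Tᵢ} Γⱼ⁰`. -/
theorem virtuallyPrime_product_factorization {n : ℕ} (hn : 1 ≤ n)
    (Γ : Fin n → Type*) [∀ j, Group (Γ j)] (hprime : ∀ j, VirtuallyPrime (Γ j))
    (S₁ S₂ : Subgroup (∀ j, Γ j))
    (hcomm : ∀ a ∈ S₁, ∀ b ∈ S₂, a * b = b * a)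
    (hdisj : S₁ ⊓ S₂ = ⊥)
    (hfi : (S₁ ⊔ S₂).FiniteIndex) :
    ∃ (S₁₀ S₂₀ : Subgroup (∀ j, Γ j)) (Γ₀ : ∀ j, Subgroup (Γ j)) (T₁ T₂ : Finset (Fin n)),
      S₁₀ ≤ S₁ ∧ S₂₀ ≤ S₂ ∧ S₁₀.relIndex S₁ ≠ 0 ∧ S₂₀.relIndex S₂ ≠ 0 ∧
      (∀ j, (Γ₀ j).FiniteIndex) ∧ Disjoint T₁ T₂ ∧ T₁ ∪ T₂ = Finset.univ ∧
      S₁₀ = Subgroup.pi Set.univ (fun j => if j ∈ T₁ then Γ₀ j else ⊥) ∧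
      S₂₀ = Subgroup.pi Set.univ (fun j => if j ∈ T₂ then Γ₀ j else ⊥) :=
  virtuallyPrime_product_factorization_general Γ hprime S₁ S₂ hcomm hfi
end

section
/- Let Λ be a countable group and Σ ≤ Λ a subgroup. Then there exists an increasing sequence of subgroups Ω₁ ≤ Ω₂ ≤ ⋯ of Λ such that: (i) each Ωₙ is contained in the virtual centralizer vC_Λ(Σ); (ii) each Ωₙ is normalized by Σ, i.e. sΩₙs⁻¹ = Ωₙ for all s ∈ Σ; (iii) ⋃_{n ≥ 1} Ωₙ = vC_Λ(Σ) as subsets of Λ; and (iv) the centralizer C_Σ(Ωₙ) = {s ∈ Σ : sω = ωs for all ω ∈ Ωₙ} has finite index in Σ for every n. In particular, the subgroups C_Σ(Ωₙ) form a descending sequence Σ ≥ C_Σ(Ω₁) ≥ C_Σ(Ω₂) ≥ ⋯ of finite index subgroups of Σ. -/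
/-!
Enumerate `vC_Λ(Σ)` as `g₀, g₁, …` and let `Ωₙ` be generated by the `Σ`-conjugates of
`g₀, …, gₙ₋₁`. Each `C_Σ(gᵢ)` has finite index in `Σ`, hence so does its normal core in `Σ`,
which centralizes every `Σ`-conjugate of `gᵢ`; intersecting finitely many of these shows that
`C_Σ(Ωₙ)` has finite index in `Σ`.
-/

namespace Subgroup

variable {Λ : Type*} [Group Λ] (S : Subgroup Λ)

theorem relIndex_centralizer_ne_zero_of_finite {F : Set Λ} (hF : F.Finite)
    (h : ∀ g ∈ F, (centralizer {g}).relIndex S ≠ 0) : (centralizer F).relIndex S ≠ 0 := by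
  have := hF.to_subtype
  rw [centralizer_eq_iInf, iInf_subtype']
  exact relIndex_iInf_ne_zero fun g => h g g.2

theorem relIndex_centralizer_singleton_ne_zero_of_mem_closure {F : Set Λ} (hF : F.Finite)
    (h : ∀ g ∈ F, (centralizer {g}).relIndex S ≠ 0) {x : Λ} (hx : x ∈ closure F) :
    (centralizer {x}).relIndex S ≠ 0 := by
  refine fun h0 => relIndex_centralizer_ne_zero_of_finite S hF h
    (relIndex_eq_zero_of_le_left ?_ h0)
  rw [← centralizer_closure]
  exact centralizer_le (Set.singleton_subset_iff.mpr hx)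

def virtualCentralizer : Subgroup Λ where
  carrier := {g | (centralizer {g}).relIndex S ≠ 0}
  one_mem' := relIndex_centralizer_singleton_ne_zero_of_mem_closure S Set.finite_empty
    (by simp) (one_mem _)
  mul_mem' {g h} hg hh := relIndex_centralizer_singleton_ne_zero_of_mem_closure S
    (Set.toFinite {g, h}) (by simpa using ⟨hg, hh⟩)
    (mul_mem (subset_closure (by simp)) (subset_closure (by simp)))
  inv_mem' {g} hg := relIndex_centralizer_singleton_ne_zero_of_mem_closure S
    (Set.finite_singleton g) (by simpa using hg) (inv_mem (subset_closure rfl))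

def conjugatesOfSet (X : Set Λ) : Set Λ :=
  {x | ∃ s ∈ S, ∃ g ∈ X, s * g * s⁻¹ = x}

theorem subset_conjugatesOfSet (X : Set Λ) : X ⊆ S.conjugatesOfSet X :=
  fun g hg => ⟨1, one_mem S, g, hg, by simp⟩

theorem conjugatesOfSet_mono {X Y : Set Λ} (h : X ⊆ Y) :
    S.conjugatesOfSet X ⊆ S.conjugatesOfSet Y :=
  fun _ ⟨s, hs, g, hg, hx⟩ => ⟨s, hs, g, h hg, hx⟩

theorem conj_mem_conjugatesOfSet {X : Set Λ} {s x : Λ} (hs : s ∈ S)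
    (hx : x ∈ S.conjugatesOfSet X) : s * x * s⁻¹ ∈ S.conjugatesOfSet X := by
  obtain ⟨t, ht, g, hg, rfl⟩ := hx
  exact ⟨s * t, mul_mem hs ht, g, hg, by group⟩

theorem le_normalizer_closure_conjugatesOfSet (X : Set Λ) :
    S ≤ normalizer (closure (S.conjugatesOfSet X) : Set Λ) :=
  le_normalizer_closure_iff.mpr fun _ hs _ hx =>
    subset_closure (S.conj_mem_conjugatesOfSet hs hx)

theorem relIndex_centralizer_conjugatesOfSet_ne_zero {X : Set Λ}
    (hX : (centralizer X).relIndex S ≠ 0) :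
    (centralizer (S.conjugatesOfSet X)).relIndex S ≠ 0 := by
  have : ((centralizer X).subgroupOf S).FiniteIndex := ⟨hX⟩
  suffices ((centralizer X).subgroupOf S).normalCore ≤
      (centralizer (S.conjugatesOfSet X)).subgroupOf S from
    (finiteIndex_of_le this).index_ne_zero
  intro t ht
  rw [mem_subgroupOf, mem_centralizer_iff]
  rintro _ ⟨s, hs, g, hg, rfl⟩
  have hconj : s⁻¹ * t * s ∈ centralizer X := by
    simpa [mem_subgroupOf] using ht ⟨s, hs⟩⁻¹
  have := (Commute.conj_iff s).mpr (mem_centralizer_iff.mp hconj g hg)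
  simpa [mul_assoc] using this.eq

theorem conjugatesOfSet_subset_virtualCentralizer {X : Set Λ}
    (hX : X ⊆ S.virtualCentralizer) : S.conjugatesOfSet X ⊆ S.virtualCentralizer := by
  rintro _ ⟨s, hs, g, hg, rfl⟩
  have hcent := relIndex_centralizer_conjugatesOfSet_ne_zero S (hX hg)
  refine fun h0 => hcent (relIndex_eq_zero_of_le_left (centralizer_le ?_) h0)
  exact Set.singleton_subset_iff.mpr ⟨s, hs, g, rfl, rfl⟩

end Subgroup

/-- For a countable group `Λ` and a subgroup `Σ ≤ Λ`, there is an increasing sequence of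
subgroups `Ω₁ ≤ Ω₂ ≤ ⋯` of `Λ` such that: each `Ωₙ` is contained in the virtual
centralizer `vC_Λ(Σ)`; each `Ωₙ` is normalized by `Σ`; `⋃ₙ Ωₙ = vC_Λ(Σ)`; and the
centralizer `C_Σ(Ωₙ)` has finite index in `Σ` for every `n` (so the `C_Σ(Ωₙ)` form a
descending sequence of finite index subgroups of `Σ`). -/
theorem exists_increasing_sequence_virtualCentralizer {Λ : Type*} [Group Λ] [Countable Λ]
    (S : Subgroup Λ) :
    ∃ Ω : ℕ → Subgroup Λ,
      Monotone Ω ∧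
      (∀ n, ∀ g ∈ Ω n, (Subgroup.centralizer {g}).relIndex S ≠ 0) ∧
      (∀ n, ∀ s ∈ S, ∀ g : Λ, g ∈ Ω n ↔ s * g * s⁻¹ ∈ Ω n) ∧
      (∀ g : Λ, (∃ n, g ∈ Ω n) ↔ (Subgroup.centralizer {g}).relIndex S ≠ 0) ∧
      (∀ n, (Subgroup.centralizer (Ω n : Set Λ)).relIndex S ≠ 0) := by
  obtain ⟨f, hf⟩ := (S.virtualCentralizer : Set Λ).to_countable.exists_eq_range
    ⟨1, one_mem _⟩
  have hfv (n : ℕ) : f '' Set.Iio n ⊆ S.virtualCentralizer :=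
    hf ▸ Set.image_subset_range f _
  let Ω n := Subgroup.closure (S.conjugatesOfSet (f '' Set.Iio n))
  have hΩv (n : ℕ) : Ω n ≤ S.virtualCentralizer :=
    Subgroup.closure_le _ |>.mpr (S.conjugatesOfSet_subset_virtualCentralizer (hfv n))
  refine ⟨Ω, fun m n hmn => ?_, fun n g hg => hΩv n hg, fun n s hs => ?_,
    fun g => ⟨fun ⟨n, hg⟩ => hΩv n hg, fun hg => ?_⟩, fun n => ?_⟩
  · exact Subgroup.closure_mono
      (S.conjugatesOfSet_mono (Set.image_mono (Set.Iio_subset_Iio hmn)))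
  · exact Subgroup.mem_normalizer_iff.mp (S.le_normalizer_closure_conjugatesOfSet _ hs)
  · obtain ⟨n, rfl⟩ : g ∈ Set.range f := hf ▸ hg
    exact ⟨n + 1, Subgroup.subset_closure
      (S.subset_conjugatesOfSet _ ⟨n, Nat.lt_succ_self n, rfl⟩)⟩
  · rw [Subgroup.centralizer_closure]
    exact S.relIndex_centralizer_conjugatesOfSet_ne_zero
      (S.relIndex_centralizer_ne_zero_of_finite ((Set.finite_Iio n).image f) (hfv n))
end

section
/- Let Γ be a group and H ≤ Γ a subgroup. Then the virtual centralizer vC_Γ(H) is contained in the quasi-normalizer QN_Γ(H): for every g ∈ Γ such that the centralizer C_H(g) has finite index in H, there exists a finite subset F ⊆ Γ with Hg ⊆ ⋃_{f ∈ F} fH and gH ⊆ ⋃_{f ∈ F} Hf. -/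
/-! If `H = T · C_H(g)` for a finite set `T ⊆ H`, then `h = t c` gives `h g = (t g) c`, and
writing `h⁻¹ = t c` gives `g h = c⁻¹ (g t⁻¹)`; so `F = T g ∪ g T⁻¹` works. -/

namespace Subgroup

variable {G : Type*} [Group G]

theorem exists_finset_forall_eq_mul_of_relIndex_ne_zero {K H : Subgroup G}
    (hKH : K.relIndex H ≠ 0) : ∃ T : Finset G, ∀ h ∈ H, ∃ t ∈ T, ∃ k ∈ H ⊓ K, h = t * k := by
  classical
  have : Finite (H ⧸ K.subgroupOf H) := index_ne_zero_iff_finite.mp hKH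
  have := Fintype.ofFinite (H ⧸ K.subgroupOf H)
  refine ⟨Finset.univ.image fun q : H ⧸ K.subgroupOf H => ((q.out : H) : G), fun h hh => ?_⟩
  obtain ⟨k, hk⟩ := QuotientGroup.mk_out_eq_mul (K.subgroupOf H) ⟨h, hh⟩
  refine ⟨_, Finset.mem_image_of_mem _ (Finset.mem_univ (QuotientGroup.mk (⟨h, hh⟩ : H))),
    ((k : H) : G)⁻¹, ⟨H.inv_mem (k : H).2, K.inv_mem (mem_subgroupOf.mp k.2)⟩, ?_⟩
  rw [hk, coe_mul, mul_inv_cancel_right]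

end Subgroup

open Subgroup in
/-- The virtual centralizer is contained in the quasi-normalizer: if `g ∈ Γ` has
centralizer of finite index in a subgroup `H ≤ Γ`, then there is a finite set `F ⊆ Γ`
with `Hg ⊆ ⋃_{f ∈ F} fH` and `gH ⊆ ⋃_{f ∈ F} Hf`. -/
theorem virtualCentralizer_subset_quasiNormalizer {Γ : Type*} [Group Γ]
    (H : Subgroup Γ) (g : Γ) (hg : (Subgroup.centralizer {g}).relIndex H ≠ 0) :
    ∃ F : Finset Γ,
      (∀ h ∈ H, ∃ f ∈ F, ∃ h' ∈ H, h * g = f * h') ∧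
      (∀ h ∈ H, ∃ f ∈ F, ∃ h' ∈ H, g * h = h' * f) := by
  classical
  obtain ⟨T, hT⟩ := exists_finset_forall_eq_mul_of_relIndex_ne_zero hg
  refine ⟨T.image (· * g) ∪ T.image (g * ·⁻¹), fun h hh => ?_, fun h hh => ?_⟩
  · obtain ⟨t, ht, k, ⟨hkH, hkg⟩, rfl⟩ := hT h hh
    refine ⟨t * g, Finset.mem_union_left _ (Finset.mem_image_of_mem _ ht), k, hkH, ?_⟩
    rw [mul_assoc, mem_centralizer_singleton_iff.mp hkg, mul_assoc]
  · obtain ⟨t, ht, k, ⟨hkH, hkg⟩, hinv⟩ := hT h⁻¹ (H.inv_mem hh)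
    refine ⟨g * t⁻¹, Finset.mem_union_right _ (Finset.mem_image_of_mem _ ht), k⁻¹,
      H.inv_mem hkH, ?_⟩
    rw [← inv_inv h, hinv, mul_inv_rev, ← mul_assoc, ← mul_assoc,
      (Commute.inv_right (mem_centralizer_singleton_iff.mp hkg).symm)]
end
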